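/- arXiv:2411.17037 — 3 statements merged into one kernel-verified Lean document; each statement's English description precedes it below -/
import Mathlib

section
/- Let (X, 𝒰) be a uniform space and f : (X, 𝒰) → (X, 𝒰) a uniformly/topologically continuous function. Then the Zadeh extension f̂ : (ℱ(X), 𝒰_∞) → (ℱ(X), 𝒰_∞) is continuous, where 𝒰_∞ is the level-wise uniformity. -/
open Set Filter Topology
open scoped Uniformity

/-- The α-cut of a fuzzy set: `{x | α ≤ u x}` for `α ≠ 0`, and the support
(closure of `{x | 0 < u x}`) for `α = 0`. -/
noncomputable def fuzzyCut {X : Type*} [TopologicalSpace X] (u : X → ℝ) (α : ℝ) : Set X :=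
  if α = 0 then closure {x | 0 < u x} else {x | α ≤ u x}

/-- `u` belongs to `ℱ(X)`: a normal upper semicontinuous `[0,1]`-valued fuzzy set
with compact support. -/
structure IsFuzzySet {X : Type*} [TopologicalSpace X] (u : X → ℝ) : Prop where
  mem_Icc : ∀ x, u x ∈ Set.Icc (0:ℝ) 1
  usc : UpperSemicontinuous u
  normal : ∃ x, u x = 1
  compact_supp : IsCompact (closure {x | 0 < u x})

/-- The Zadeh extension of `f`: `x ↦ sup {u z : f z = x}` (and `0` when the
preimage is empty, since `sSup ∅ = 0` in `ℝ`). -/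
noncomputable def zadeh {X : Type*} (f : X → X) (u : X → ℝ) : X → ℝ :=
  fun x => sSup (u '' (f ⁻¹' {x}))

/-- `W(A) = ⋃ a ∈ A, W(a)` where `W(a) = {y | (a, y) ∈ W}`. -/
def ballImage {Y : Type*} (W : Set (Y × Y)) (A : Set Y) : Set Y :=
  {y | ∃ a ∈ A, (a, y) ∈ W}

/-- The Hausdorff entourage relation `𝒦[W]`: `(A,B) ∈ 𝒦[W]` iff `A ⊆ W(B)` and `B ⊆ W(A)`. -/
def KRel {Y : Type*} (W : Set (Y × Y)) (A B : Set Y) : Prop :=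
  A ⊆ ballImage W B ∧ B ⊆ ballImage W A

/-- The level-wise entourage relation `ℱ[W]`: `(u_α, v_α) ∈ 𝒦[W]` for all `α ∈ [0,1]`. -/
def FRel {X : Type*} [TopologicalSpace X] (W : Set (X × X)) (u v : X → ℝ) : Prop :=
  ∀ α ∈ Set.Icc (0:ℝ) 1, KRel W (fuzzyCut u α) (fuzzyCut v α)

/-- The Skorokhod entourage relation `G[W, ε]`: there is an increasing homeomorphism `t`
of `[0,1]` with `‖t‖ < ε` and `(u_α, v_{t α}) ∈ 𝒦[W]` for all `α ∈ [0,1]`. -/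
def SkoRel {X : Type*} [TopologicalSpace X] (W : Set (X × X)) (ε : ℝ) (u v : X → ℝ) : Prop :=
  ∃ t : ℝ → ℝ, StrictMonoOn t (Set.Icc 0 1) ∧ t 0 = 0 ∧ t 1 = 1 ∧
    Set.MapsTo t (Set.Icc 0 1) (Set.Icc 0 1) ∧ Set.SurjOn t (Set.Icc 0 1) (Set.Icc 0 1) ∧
    (∀ α ∈ Set.Icc (0:ℝ) 1, |t α - α| < ε) ∧
    (∀ α ∈ Set.Icc (0:ℝ) 1, KRel W (fuzzyCut u α) (fuzzyCut v (t α)))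

/-- The sendograph of `u`: `end(u) ∩ (u₀ × [0,1])`. -/
noncomputable def send {X : Type*} [TopologicalSpace X] (u : X → ℝ) : Set (X × ℝ) :=
  {p | p.1 ∈ fuzzyCut u 0 ∧ p.2 ∈ Set.Icc (0:ℝ) 1 ∧ p.2 ≤ u p.1}

/-- The product entourage `U × V_ε` on `X × [0,1]`. -/
def prodEnt {X : Type*} (U : Set (X × X)) (ε : ℝ) : Set ((X × ℝ) × (X × ℝ)) :=
  {p | (p.1.1, p.2.1) ∈ U ∧ |p.1.2 - p.2.2| < ε}

/-- The sendograph entourage relation `S[U, ε]`. -/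
noncomputable def SendRel {X : Type*} [TopologicalSpace X] (U : Set (X × X)) (ε : ℝ)
    (u v : X → ℝ) : Prop :=
  KRel (prodEnt U ε) (send u) (send v)

/-- `u_{α⁺} = closure (⋃ β ∈ (α, 1], u_β)`, the right limit of the level map. -/
noncomputable def cutPlus {X : Type*} [TopologicalSpace X] (u : X → ℝ) (α : ℝ) : Set X :=
  closure (⋃ β ∈ Set.Ioc α 1, fuzzyCut u β)

/-- `B` belongs to the Vietoris basic open set `⟨V 0, …, V (k-1)⟩`. -/
def inVietoris {Y : Type*} (B : Set Y) (k : ℕ) (V : Fin k → Set Y) : Prop :=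
  B ⊆ (⋃ i, V i) ∧ ∀ i, (B ∩ V i).Nonempty

/-!
For `α > 0`, compactness of the support of `u` and upper semicontinuity show that every point
of the `α`-cut of `f̂ u` is topologically indistinguishable from a point of `f '' u_α`, so
`f '' u_α ⊆ (f̂ u)_α ⊆ closure (f '' u_α)` and the two sets are Hausdorff-close for every
entourage. Since `f` is uniformly continuous at the compact support of `u`, level-wise closeness
of `u` and `v` passes to the images `f '' u_α` and `f '' v_α`, and the three Hausdorff
estimates compose.
-/

section HausdorffEntourage

variable {X Y : Type*}

theorem KRel.mono {W U : SetRel Y Y} {A B : Set Y} (h : KRel W A B) (hWU : W ⊆ U) :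
    KRel U A B :=
  ⟨h.1.trans (SetRel.image_subset_image_left hWU), h.2.trans (SetRel.image_subset_image_left hWU)⟩

theorem kRel_iff_mem_hausdorffEntourage {W : SetRel Y Y} [W.IsSymm] {A B : Set Y} :
    KRel W A B ↔ (A, B) ∈ hausdorffEntourage W := by
  rw [mem_hausdorffEntourage, SetRel.preimage_eq_image]
  rfl

theorem mem_hausdorffEntourage_of_subset_closure [UniformSpace Y] {W : SetRel Y Y}
    (hW : W ∈ 𝓤 Y) {A B : Set Y} (hBA : B ⊆ A) (hAB : A ⊆ closure B) :
    (A, B) ∈ hausdorffEntourage W :=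
  have : W.IsRefl := SetRel.id_subset_iff.1 (refl_le_uniformity hW)
  ⟨hAB.trans (UniformSpace.closure_subset_preimage hW B), hBA.trans (W.self_subset_image A)⟩

theorem image_mem_hausdorffEntourage {V : SetRel X X} {W : SetRel Y Y} {f : X → Y}
    {A B : Set X} (h : (A, B) ∈ hausdorffEntourage V)
    (hf : ∀ a ∈ A, ∀ b, (a, b) ∈ V → (f a, f b) ∈ W) :
    (f '' A, f '' B) ∈ hausdorffEntourage W := by
  refine ⟨?_, ?_⟩
  · rintro _ ⟨a, ha, rfl⟩
    obtain ⟨b, hb, hab⟩ := h.1 ha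
    exact ⟨f b, mem_image_of_mem f hb, hf a ha b hab⟩
  · rintro _ ⟨b, hb, rfl⟩
    obtain ⟨a, ha, hab⟩ := h.2 hb
    exact ⟨f a, mem_image_of_mem f ha, hf a ha b hab⟩

end HausdorffEntourage

section FuzzyCut

variable {X : Type*} [TopologicalSpace X] {u : X → ℝ} {α : ℝ}

theorem fuzzyCut_zero (u : X → ℝ) : fuzzyCut u 0 = closure {x | 0 < u x} := if_pos rfl

theorem fuzzyCut_of_ne_zero (u : X → ℝ) (hα : α ≠ 0) : fuzzyCut u α = {x | α ≤ u x} :=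
  if_neg hα

theorem fuzzyCut_subset_fuzzyCut_zero (u : X → ℝ) (hα : 0 ≤ α) : fuzzyCut u α ⊆ fuzzyCut u 0 := by
  rcases hα.eq_or_lt with rfl | hα
  · rfl
  · rw [fuzzyCut_of_ne_zero u hα.ne', fuzzyCut_zero]
    exact fun x hx => subset_closure (hα.trans_le hx)

theorem IsFuzzySet.bddAbove_range (hu : IsFuzzySet u) : BddAbove (range u) :=
  ⟨1, by rintro _ ⟨x, rfl⟩; exact (hu.mem_Icc x).2⟩

end FuzzyCut

section Zadeh

variable {X : Type*} {f : X → X} {u : X → ℝ} {x : X} {α β : ℝ}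

theorem le_zadeh_apply (hu : BddAbove (range u)) (z : X) : u z ≤ zadeh f u (f z) :=
  le_csSup (hu.mono (image_subset_range _ _)) (mem_image_of_mem u rfl)

theorem exists_lt_of_lt_zadeh_apply (hβ : 0 ≤ β) (h : β < zadeh f u x) :
    ∃ z, f z = x ∧ β < u z := by
  have hne : (u '' (f ⁻¹' {x})).Nonempty := by
    by_contra hempty
    rw [not_nonempty_iff_eq_empty] at hempty
    simp only [zadeh, hempty, Real.sSup_empty] at h
    linarith
  obtain ⟨_, ⟨z, hz, rfl⟩, hβz⟩ := exists_lt_of_lt_csSup hne h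
  exact ⟨z, hz, hβz⟩

variable [TopologicalSpace X]

theorem image_fuzzyCut_subset_fuzzyCut_zadeh (hf : Continuous f) (hu : BddAbove (range u))
    (α : ℝ) : f '' fuzzyCut u α ⊆ fuzzyCut (zadeh f u) α := by
  by_cases hα : α = 0
  · subst hα
    rw [fuzzyCut_zero, fuzzyCut_zero]
    refine (image_closure_subset_closure_image hf).trans (closure_mono ?_)
    rintro _ ⟨z, hz, rfl⟩
    exact hz.trans_le (le_zadeh_apply hu z)
  · rw [fuzzyCut_of_ne_zero u hα, fuzzyCut_of_ne_zero _ hα]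
    rintro _ ⟨z, hz, rfl⟩
    exact hz.trans (le_zadeh_apply hu z)

/-- `z` lies in the closed sets `closure {z | f z = x ∧ β < u z}`, `0 ≤ β < α`, which are nested,
nonempty and contained in the compact support; upper semicontinuity then gives `α ≤ u z`. -/
theorem exists_specializes_of_le_zadeh_apply (hf : Continuous f) (hu : IsFuzzySet u)
    (hα : 0 < α) (hx : α ≤ zadeh f u x) : ∃ z, α ≤ u z ∧ x ⤳ f z := by
  let A : Ico 0 α → Set X := fun β => closure {z | f z = x ∧ (β : ℝ) < u z}
  have hA_supp : ∀ β, A β ⊆ closure {z | 0 < u z} :=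
    fun β => closure_mono fun z hz => β.2.1.trans_lt hz.2
  have : Nonempty (Ico 0 α) := ⟨⟨0, le_rfl, hα⟩⟩
  obtain ⟨z, hz⟩ := IsCompact.nonempty_iInter_of_directed_nonempty_isCompact_isClosed A
    (Antitone.directed_ge fun β γ hβγ =>
      closure_mono fun z hz => ⟨hz.1, (Subtype.coe_le_coe.2 hβγ).trans_lt hz.2⟩)
    (fun β => (exists_lt_of_lt_zadeh_apply β.2.1 (β.2.2.trans_le hx)).imp
      fun z hz => subset_closure hz)
    (fun β => hu.compact_supp.of_isClosed_subset isClosed_closure (hA_supp β))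
    (fun _ => isClosed_closure)
  rw [mem_iInter] at hz
  refine ⟨z, le_of_forall_lt_imp_le_of_dense fun β hβ => ?_, ?_⟩
  · rcases lt_or_ge β 0 with hβ0 | hβ0
    · exact hβ0.le.trans (hu.mem_Icc z).1
    · exact closure_minimal (fun z hz => hz.2.le) (hu.usc.isClosed_preimage β) (hz ⟨β, hβ0, hβ⟩)
  · rw [specializes_iff_mem_closure]
    exact hf.closure_preimage_subset {x} (closure_mono (fun z hz => hz.1) (hz ⟨0, le_rfl, hα⟩))

theorem fuzzyCut_zadeh_subset_closure_image [R0Space X] (hf : Continuous f) (hu : IsFuzzySet u)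
    (hα : 0 ≤ α) : fuzzyCut (zadeh f u) α ⊆ closure (f '' fuzzyCut u α) := by
  rcases hα.eq_or_lt with rfl | hα
  · rw [fuzzyCut_zero]
    refine closure_mono fun x hx => ?_
    obtain ⟨z, rfl, hz⟩ := exists_lt_of_lt_zadeh_apply le_rfl hx
    exact mem_image_of_mem f (fuzzyCut_zero u ▸ subset_closure hz)
  · intro x hx
    rw [fuzzyCut_of_ne_zero _ hα.ne'] at hx
    obtain ⟨z, hz, hxz⟩ := exists_specializes_of_le_zadeh_apply hf hu hα hx
    refine closure_mono (singleton_subset_iff.2 ?_) (specializes_iff_mem_closure.1 hxz.symm)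
    exact mem_image_of_mem f ((fuzzyCut_of_ne_zero u hα.ne').symm ▸ hz)

end Zadeh

/-- Continuity of the Zadeh extension with respect to the level-wise uniformity `𝒰_∞`:
for each `u ∈ ℱ(X)` and each entourage `U`, there is an entourage `V` such that the basic
`𝒰_∞`-ball `ℱ[V](u)` is mapped into `ℱ[U](f̂ u)`. -/
theorem stmt9 {X : Type*} [UniformSpace X] {f : X → X} (hf : Continuous f) :
    ∀ u : X → ℝ, IsFuzzySet u → ∀ U ∈ 𝓤 X, ∃ V ∈ 𝓤 X,
      ∀ v : X → ℝ, IsFuzzySet v → FRel V u v → FRel U (zadeh f u) (zadeh f v) := by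
  intro u hu U hU
  obtain ⟨W, hW, hW_symm, hWU⟩ := comp_comp_symm_mem_uniformity_sets (symmetrize_mem_uniformity hU)
  have hS := (fuzzyCut_zero u ▸ hu.compact_supp).uniformContinuousAt_of_continuousAt f
    (fun _ _ => hf.continuousAt) hW
  refine ⟨SetRel.symmetrize _, symmetrize_mem_uniformity hS, fun v hv huv α hα => ?_⟩
  have hcut : ∀ {w : X → ℝ}, IsFuzzySet w →
      (fuzzyCut (zadeh f w) α, f '' fuzzyCut w α) ∈ hausdorffEntourage W := fun hw =>
    mem_hausdorffEntourage_of_subset_closure hW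
      (image_fuzzyCut_subset_fuzzyCut_zadeh hf hw.bddAbove_range α)
      (fuzzyCut_zadeh_subset_closure_image hf hw hα.1)
  have himage : (f '' fuzzyCut u α, f '' fuzzyCut v α) ∈ hausdorffEntourage W :=
    image_mem_hausdorffEntourage ((kRel_iff_mem_hausdorffEntourage).1 (huv α hα))
      fun a ha _ hab => hab.1 (fuzzyCut_subset_fuzzyCut_zero u hα.1 ha)
  have : (fuzzyCut (zadeh f u) α, fuzzyCut (zadeh f v) α) ∈
      hausdorffEntourage (SetRel.symmetrize U) := by
    refine hausdorffEntourage_mono hWU ?_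
    rw [hausdorffEntourage_comp, hausdorffEntourage_comp]
    exact ⟨_, ⟨_, hcut hu, himage⟩, SetRel.symm _ (hcut hv)⟩
  exact ((kRel_iff_mem_hausdorffEntourage).2 this).mono SetRel.symmetrize_subset_self
end

section
/- Let (X, 𝒰) be a uniform space and f : (X, 𝒰) → (X, 𝒰) continuous. Then the Zadeh extension f̂ : (ℱ(X), 𝒰_0) → (ℱ(X), 𝒰_0) is continuous, where 𝒰_0 is the Skorokhod uniformity. -/
open Set Filter Topology
open scoped Uniformity

section Aux

variable {X : Type*}

lemma le_zadeh {f : X → X} {u : X → ℝ} (hb : ∀ x, u x ≤ 1) (z : X) :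
    u z ≤ zadeh f u (f z) :=
  le_csSup ⟨1, by rintro _ ⟨w, -, rfl⟩; exact hb w⟩ ⟨z, rfl, rfl⟩

lemma zadeh_cut_superset [TopologicalSpace X] {f : X → X} (hf : Continuous f)
    {u : X → ℝ} (hu : IsFuzzySet u) (α : ℝ) :
    f '' fuzzyCut u α ⊆ fuzzyCut (zadeh f u) α := by
  have hb : ∀ x, u x ≤ 1 := fun x => (hu.mem_Icc x).2
  rcases eq_or_ne α 0 with rfl | hα
  · simp only [fuzzyCut, if_pos rfl]
    calc f '' closure {x | 0 < u x}
        ⊆ closure (f '' {x | 0 < u x}) := image_closure_subset_closure_image hf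
      _ ⊆ closure {x | 0 < zadeh f u x} := closure_mono (by
          rintro _ ⟨z, hz, rfl⟩
          exact lt_of_lt_of_le hz (le_zadeh hb z))
  · simp only [fuzzyCut, if_neg hα]
    rintro _ ⟨z, hz, rfl⟩
    exact le_trans hz (le_zadeh hb z)

lemma cut_subset_supp [TopologicalSpace X] {u : X → ℝ} {α : ℝ} (hα : 0 ≤ α) :
    fuzzyCut u α ⊆ fuzzyCut u 0 := by
  rcases eq_or_lt_of_le hα with rfl | hα
  · exact subset_rfl
  · simp only [fuzzyCut, if_neg (ne_of_gt hα), if_pos rfl]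
    exact fun z hz => subset_closure (lt_of_lt_of_le hα hz)

lemma zadeh_cut_subset [UniformSpace X] {f : X → X} (hf : Continuous f)
    {u : X → ℝ} (hu : IsFuzzySet u) {W : Set (X × X)} (hW : W ∈ 𝓤 X)
    (hWs : SetRel.IsSymm W) {α : ℝ} (hα : 0 ≤ α) :
    ∀ x ∈ fuzzyCut (zadeh f u) α, ∃ z ∈ fuzzyCut u α, (f z, x) ∈ W := by
  have hb : ∀ y : X, BddAbove (u '' (f ⁻¹' {y})) :=
    fun y => ⟨1, by rintro _ ⟨w, -, rfl⟩; exact (hu.mem_Icc w).2⟩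
  rcases eq_or_lt_of_le hα with rfl | hα
  · intro x hx
    have h1 : {y | 0 < zadeh f u y} ⊆ f '' {z | 0 < u z} := by
      intro y hy
      have hne : (u '' (f ⁻¹' {y})).Nonempty := by
        by_contra h
        rw [Set.not_nonempty_iff_eq_empty] at h
        have : zadeh f u y = 0 := by simp [zadeh, h, Real.sSup_empty]
        rw [Set.mem_setOf_eq, this] at hy
        exact lt_irrefl _ hy
      obtain ⟨a, ⟨z, hz, rfl⟩, hlt⟩ := exists_lt_of_lt_csSup hne hy
      exact ⟨z, hlt, hz⟩
    have hx' : x ∈ closure (f '' {z | 0 < u z}) := by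
      rw [fuzzyCut, if_pos rfl] at hx
      exact closure_mono h1 hx
    obtain ⟨s, hs1, hs2⟩ := (UniformSpace.mem_closure_iff_ball.mp hx') hW
    obtain ⟨z, hz, rfl⟩ := hs2
    refine ⟨z, ?_, hWs.symm _ _ hs1⟩
    rw [fuzzyCut, if_pos rfl]
    exact subset_closure hz
  · intro x hx
    rw [fuzzyCut, if_neg (ne_of_gt hα)] at hx
    have hne : (u '' (f ⁻¹' {x})).Nonempty := by
      by_contra h
      rw [Set.not_nonempty_iff_eq_empty] at h
      have : zadeh f u x = 0 := by simp [zadeh, h, Real.sSup_empty]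
      rw [Set.mem_setOf_eq, this] at hx
      exact absurd hx (not_le.mpr hα)
    -- decreasing sequence of compact sets
    set C : ℕ → Set X := fun n => closure (f ⁻¹' {x} ∩ {z | α - α / (n + 2) ≤ u z}) with hC
    have hβpos : ∀ n : ℕ, (0:ℝ) < α / (n + 2) := fun n =>
      div_pos hα (by positivity)
    have hβlt : ∀ n : ℕ, α - α / (n + 2) < α := fun n =>
      sub_lt_self _ (hβpos n)
    have hCne : ∀ n, (C n).Nonempty := by
      intro n
      obtain ⟨a, ⟨z, hz, rfl⟩, hlt⟩ :=
        exists_lt_of_lt_csSup hne (lt_of_lt_of_le (hβlt n) hx)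
      exact ⟨z, subset_closure ⟨hz, le_of_lt hlt⟩⟩
    have hCd : ∀ n, C (n + 1) ⊆ C n := by
      intro n
      apply closure_mono
      apply Set.inter_subset_inter_right
      intro z hz
      refine le_trans (sub_le_sub_left ?_ α) hz
      apply div_le_div_of_nonneg_left (le_of_lt hα) (by positivity)
      push_cast; linarith
    have hCcl : ∀ n, IsClosed (C n) := fun n => isClosed_closure
    have hC0 : IsCompact (C 0) := by
      apply hu.compact_supp.of_isClosed_subset isClosed_closure
      apply closure_mono
      rintro z ⟨-, hz⟩
      have hz' : α - α / (((0:ℕ):ℝ) + 2) ≤ u z := hz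
      norm_num at hz'
      show z ∈ {x | 0 < u x}
      simp only [Set.mem_setOf_eq]
      linarith
    obtain ⟨z, hz⟩ := IsCompact.nonempty_iInter_of_sequence_nonempty_isCompact_isClosed
      C hCd hCne hC0 hCcl
    simp only [Set.mem_iInter] at hz
    have hzcl : ∀ n : ℕ, α - α / (n + 2) ≤ u z := by
      intro n
      have h1 : C n ⊆ {w | α - α / (n + 2) ≤ u w} := by
        have : IsClosed {w | α - α / (n + 2) ≤ u w} := hu.usc.isClosed_preimage _
        rw [← this.closure_eq]
        exact closure_mono Set.inter_subset_right
      exact h1 (hz n)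
    have hzα : α ≤ u z := by
      by_contra h
      push_neg at h
      obtain ⟨n, hn⟩ := exists_nat_gt (α / (α - u z))
      have hd : (0:ℝ) < α - u z := by linarith
      have h2 : α / (n + 2) < α - u z := by
        rw [div_lt_iff₀ (by positivity)]
        have : α / (α - u z) < (n:ℝ) + 2 := by linarith
        calc α = (α / (α - u z)) * (α - u z) := by field_simp
          _ < ((n:ℝ) + 2) * (α - u z) := by
              exact mul_lt_mul_of_pos_right this hd
          _ = (α - u z) * ((n:ℝ) + 2) := by ring
      have := hzcl n
      linarith
    have hfz : f z ∈ closure ({x} : Set X) := by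
      have h1 : z ∈ closure (f ⁻¹' {x}) :=
        closure_mono Set.inter_subset_left (hz 0)
      have h2 : f z ∈ f '' closure (f ⁻¹' {x}) := ⟨z, h1, rfl⟩
      exact closure_mono (Set.image_preimage_subset f {x})
        (image_closure_subset_closure_image hf h2)
    obtain ⟨s, hs1, hs2⟩ := (UniformSpace.mem_closure_iff_ball.mp hfz) hW
    rw [Set.mem_singleton_iff] at hs2
    subst hs2
    refine ⟨z, ?_, hs1⟩
    rw [fuzzyCut, if_neg (ne_of_gt hα)]
    exact hzα

end Aux

/-- Continuity of the Zadeh extension with respect to the Skorokhod uniformity `𝒰_0`: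
for each `u ∈ ℱ(X)` and each basic entourage `G[U, ε]`, there are `V ∈ 𝒰` and `δ > 0` such
that the basic ball `G[V, δ](u)` is mapped into `G[U, ε](f̂ u)`. -/
theorem stmt10 {X : Type*} [UniformSpace X] {f : X → X} (hf : Continuous f) :
    ∀ u : X → ℝ, IsFuzzySet u → ∀ U ∈ 𝓤 X, ∀ ε > (0:ℝ), ∃ V ∈ 𝓤 X, ∃ δ > (0:ℝ),
      ∀ v : X → ℝ, IsFuzzySet v → SkoRel V δ u v →
        SkoRel U ε (zadeh f u) (zadeh f v) := by
  intro u hu U hU ε hε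
  obtain ⟨W, hW, hWsymm, hWU⟩ := comp_symm_mem_uniformity_sets hU
  have hKc : IsCompact (fuzzyCut u 0) := by
    rw [fuzzyCut, if_pos rfl]; exact hu.compact_supp
  have hV0 : {p : X × X | p.1 ∈ fuzzyCut u 0 → (f p.1, f p.2) ∈ W} ∈ 𝓤 X :=
    hKc.uniformContinuousAt_of_continuousAt f (fun a _ => hf.continuousAt) hW
  refine ⟨SetRel.symmetrize _, symmetrize_mem_uniformity hV0, ε, hε, ?_⟩
  rintro v hv ⟨t, ht1, ht2, ht3, ht4, ht5, ht6, ht7⟩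
  refine ⟨t, ht1, ht2, ht3, ht4, ht5, ht6, ?_⟩
  intro α hα
  have htα : t α ∈ Set.Icc (0:ℝ) 1 := ht4 hα
  have hcu : fuzzyCut u α ⊆ fuzzyCut u 0 := cut_subset_supp hα.1
  obtain ⟨hK1, hK2⟩ := ht7 α hα
  constructor
  · intro x hx
    obtain ⟨z, hz, hzx⟩ := zadeh_cut_subset hf hu hW hWsymm hα.1 x hx
    obtain ⟨y, hy, hyz⟩ := hK1 hz
    have hfzy : (f z, f y) ∈ W := hyz.2 (hcu hz)
    exact ⟨f y, zadeh_cut_superset hf hv (t α) ⟨y, hy, rfl⟩,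
      hWU ⟨f z, hWsymm.symm _ _ hfzy, hzx⟩⟩
  · intro x hx
    obtain ⟨y, hy, hyx⟩ := zadeh_cut_subset hf hv hW hWsymm htα.1 x hx
    obtain ⟨z, hz, hzy⟩ := hK2 hy
    have hfzy : (f z, f y) ∈ W := hzy.1 (hcu hz)
    exact ⟨f z, zadeh_cut_superset hf hu α ⟨z, hz, rfl⟩,
      hWU ⟨f y, hfzy, hyx⟩⟩
end

section
/- Let (X, 𝒰) be a uniform space, u ∈ ℱ(X), W ∈ 𝒰, and suppose 0 = α₀ < α₁ < ⋯ < α_n = 1 satisfies (u_{α_k⁺}, u_{α_{k+1}}) ∈ 𝒦[W] for all k. If 0 = β₀ < β₁ < ⋯ < β_m = 1 is a refinement of this partition, then (u_{β_k⁺}, u_{β_{k+1}}) ∈ 𝒦[W] for all k = 0, ..., m−1. -/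
open Set Filter Topology
open scoped Uniformity

/-!
Every interval `[β_k, β_{k+1}]` of the refinement lies in an interval `[α_j, α_{j+1}]` of the
coarse partition, since no `α_i` can lie strictly between two consecutive `β`'s. As the level
sets decrease, `u_{β_k⁺} ⊆ u_{α_j⁺} ⊆ W(u_{α_{j+1}}) ⊆ W(u_{β_{k+1}})`, and
`u_{β_{k+1}} ⊆ u_{β_k⁺} ⊆ W(u_{β_k⁺})` because `W` contains the diagonal.
-/

theorem Monotone.le_castSucc_or_succ_le {α : Type*} [Preorder α] {m : ℕ}
    {b : Fin (m + 1) → α} (hb : Monotone b) (l : Fin (m + 1)) (k : Fin m) :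
    b l ≤ b k.castSucc ∨ b k.succ ≤ b l := by
  rcases le_or_gt l k.castSucc with h | h
  · exact Or.inl (hb h)
  · exact Or.inr (hb (Fin.castSucc_lt_iff_succ_le.mp h))

theorem Fin.exists_castSucc_le_and_le_succ {α : Type*} [LinearOrder α] {n : ℕ}
    {a : Fin (n + 1) → α} {s t : α} (hst : s < t) (h0 : a 0 ≤ s) (hlast : t ≤ a (Fin.last n))
    (hgap : ∀ i, a i ≤ s ∨ t ≤ a i) :
    ∃ j : Fin n, a j.castSucc ≤ s ∧ t ≤ a j.succ := by
  -- the first index at which `a` reaches `t` is a successor `j.succ`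
  obtain ⟨i, hit, hmin⟩ := wellFounded_lt.has_min {i | t ≤ a i} ⟨Fin.last n, hlast⟩
  have hi0 : i ≠ 0 := by
    rintro rfl
    exact (hst.trans_le hit).not_ge h0
  obtain ⟨j, rfl⟩ := Fin.exists_succ_eq.mpr hi0
  refine ⟨j, (hgap j.castSucc).resolve_right fun h => hmin _ h Fin.castSucc_lt_succ, hit⟩

section Uniform

variable {Y : Type*} {W : Set (Y × Y)}

theorem ballImage_mono {A B : Set Y} (h : A ⊆ B) : ballImage W A ⊆ ballImage W B :=
  fun _ ⟨z, hz, hzy⟩ => ⟨z, h hz, hzy⟩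

theorem subset_ballImage (hW : ∀ x, (x, x) ∈ W) (A : Set Y) : A ⊆ ballImage W A :=
  fun x hx => ⟨x, hx, hW x⟩

end Uniform

section Levels

variable {X : Type*} [TopologicalSpace X] {u : X → ℝ}

theorem cutPlus_anti : Antitone (cutPlus u) :=
  fun _ _ h => closure_mono (biUnion_subset_biUnion_left (Ioc_subset_Ioc_left h))

theorem fuzzyCut_subset_fuzzyCut {α β : ℝ} (hα : 0 < α) (h : α ≤ β) :
    fuzzyCut u β ⊆ fuzzyCut u α := by
  simp only [fuzzyCut, if_neg hα.ne', if_neg (hα.trans_le h).ne']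
  exact fun _ hx => h.trans hx

theorem fuzzyCut_subset_cutPlus {α β : ℝ} (h : α < β) (hβ : β ≤ 1) :
    fuzzyCut u β ⊆ cutPlus u α :=
  (subset_biUnion_of_mem (show β ∈ Ioc α 1 from ⟨h, hβ⟩)).trans subset_closure

theorem KRel.cutPlus_fuzzyCut_of_le {W : Set (X × X)} (hW : ∀ x, (x, x) ∈ W) {α β s t : ℝ}
    (h : KRel W (cutPlus u α) (fuzzyCut u β)) (hαs : α ≤ s) (hst : s < t) (ht0 : 0 < t)
    (htβ : t ≤ β) (ht1 : t ≤ 1) :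
    KRel W (cutPlus u s) (fuzzyCut u t) :=
  ⟨(cutPlus_anti hαs).trans (h.1.trans (ballImage_mono (fuzzyCut_subset_fuzzyCut ht0 htβ))),
    (fuzzyCut_subset_cutPlus hst ht1).trans (subset_ballImage hW _)⟩

end Levels

theorem stmt18_general {X : Type*} [UniformSpace X] {u : X → ℝ}
    {W : Set (X × X)} (hW : W ∈ 𝓤 X) {n m : ℕ}
    {a : Fin (n + 1) → ℝ} {b : Fin (m + 1) → ℝ}
    (ha0 : a 0 = 0) (ha1 : a (Fin.last n) = 1)
    (hb : StrictMono b) (hb0 : b 0 = 0) (hb1 : b (Fin.last m) = 1)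
    (hrefine : Set.range a ⊆ Set.range b)
    (hpart : ∀ k : Fin n, KRel W (cutPlus u (a k.castSucc)) (fuzzyCut u (a k.succ))) :
    ∀ k : Fin m, KRel W (cutPlus u (b k.castSucc)) (fuzzyCut u (b k.succ)) := by
  intro k
  have hst : b k.castSucc < b k.succ := hb Fin.castSucc_lt_succ
  have hs0 : 0 ≤ b k.castSucc := hb0 ▸ hb.monotone (Fin.zero_le _)
  have ht1 : b k.succ ≤ 1 := hb1 ▸ hb.monotone (Fin.le_last _)
  have hgap : ∀ i, a i ≤ b k.castSucc ∨ b k.succ ≤ a i := by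
    intro i
    obtain ⟨l, hl⟩ := hrefine ⟨i, rfl⟩
    exact hl ▸ hb.monotone.le_castSucc_or_succ_le l k
  obtain ⟨j, hjs, htj⟩ :=
    Fin.exists_castSucc_le_and_le_succ hst (ha0 ▸ hs0) (ha1 ▸ ht1) hgap
  exact (hpart j).cutPlus_fuzzyCut_of_le (fun _ => refl_mem_uniformity hW) hjs hst
    (hs0.trans_lt hst) htj ht1

/-- If a partition `0 = α₀ < ⋯ < α_n = 1` satisfies `(u_{α_k⁺}, u_{α_{k+1}}) ∈ 𝒦[W]` for
all `k`, then so does any refinement `0 = β₀ < ⋯ < β_m = 1` of it. -/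
theorem stmt18 {X : Type*} [UniformSpace X] {u : X → ℝ} (hu : IsFuzzySet u)
    {W : Set (X × X)} (hW : W ∈ 𝓤 X) {n m : ℕ}
    {a : Fin (n + 1) → ℝ} {b : Fin (m + 1) → ℝ}
    (ha : StrictMono a) (ha0 : a 0 = 0) (ha1 : a (Fin.last n) = 1)
    (hb : StrictMono b) (hb0 : b 0 = 0) (hb1 : b (Fin.last m) = 1)
    (hrefine : Set.range a ⊆ Set.range b)
    (hpart : ∀ k : Fin n, KRel W (cutPlus u (a k.castSucc)) (fuzzyCut u (a k.succ))) :
    ∀ k : Fin m, KRel W (cutPlus u (b k.castSucc)) (fuzzyCut u (b k.succ)) :=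
  stmt18_general hW ha0 ha1 hb hb0 hb1 hrefine hpart
end
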